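/- arXiv:1409.4074 — 4 statements merged into one kernel-verified Lean document; each statement's English description precedes it below -/
import Mathlib

section
/- Braid relation for the bowling-ball matrices: for every index i with 1 ≤ i ≤ n−2, one has M_i · M_{i+1} · M_i = M_{i+1} · M_i · M_{i+1}. -/
open Matrix

/-- The tuple `u` with the entries in positions `i` and `i+1` interchanged
(0-indexed; returns `u` unchanged if `i+1` is out of range). -/
def swapTup (n N : ℕ) (i : ℕ) (u : Fin n → Fin (N + 1)) : Fin n → Fin (N + 1) :=
  if h : i + 1 < n then u ∘ Equiv.swap ⟨i, Nat.lt_of_succ_lt h⟩ ⟨i + 1, h⟩ else u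

/-- Jones's bowling-ball matrix `M_i` (0-indexed: `i` ranges over `0,…,n-2`,
corresponding to the lanes `i+1` and `i+2` in 1-indexed notation; it is the
identity matrix out of range).  Rows and columns are indexed by the tuples
`u : Fin n → Fin (N+1)` recording the number of balls in each lane:
`M_i e_u = e_{s_i u}` if `u i ≤ u (i+1)`, and
`M_i e_u = q • e_{s_i u} + (1-q) • e_u` if `u i > u (i+1)`. -/
def bowlM (F : Type*) [Field F] (q : F) (n N : ℕ) (i : ℕ) :
    Matrix (Fin n → Fin (N + 1)) (Fin n → Fin (N + 1)) F :=
  if h : i + 1 < n then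
    Matrix.of fun v u =>
      if u ⟨i, Nat.lt_of_succ_lt h⟩ ≤ u ⟨i + 1, h⟩ then
        (if v = swapTup n N i u then 1 else 0)
      else
        q * (if v = swapTup n N i u then 1 else 0) + (1 - q) * (if v = u then 1 else 0)
  else 1


/-!
Column `u` of either side is obtained by applying the defining rule of `M_i` three times, so it
depends only on the relative order of `u_i, u_{i+1}, u_{i+2}`. In each of the thirteen possible
order types the two columns agree, using only the braid relation `s_i s_{i+1} s_i = s_{i+1} s_i s_{i+1}`
for the transpositions and the fact that `s_i u = u` when `u_i = u_{i+1}`.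
-/

theorem Equiv.swap_mul_swap_mul_swap_eq {α : Type*} [DecidableEq α] {a b c : α} (hab : a ≠ b)
    (hac : a ≠ c) (hbc : b ≠ c) :
    swap a b * swap b c * swap a b = swap b c * swap a b * swap b c := by
  rw [swap_mul_swap_mul_swap hab hac, swap_comm a b, swap_comm b c,
    swap_mul_swap_mul_swap hbc.symm hac.symm, swap_comm]

section swapTup

variable {n N i : ℕ}

theorem swapTup_of_lt (h : i + 1 < n) (u : Fin n → Fin (N + 1)) :
    swapTup n N i u = u ∘ Equiv.swap ⟨i, Nat.lt_of_succ_lt h⟩ ⟨i + 1, h⟩ :=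
  dif_pos h

theorem swapTup_apply_left (h : i + 1 < n) (u : Fin n → Fin (N + 1)) :
    swapTup n N i u ⟨i, Nat.lt_of_succ_lt h⟩ = u ⟨i + 1, h⟩ := by
  simp [swapTup_of_lt h]

theorem swapTup_apply_right (h : i + 1 < n) (u : Fin n → Fin (N + 1)) :
    swapTup n N i u ⟨i + 1, h⟩ = u ⟨i, Nat.lt_of_succ_lt h⟩ := by
  simp [swapTup_of_lt h]

theorem swapTup_apply_of_ne (h : i + 1 < n) (u : Fin n → Fin (N + 1)) {k : Fin n}
    (hk : (k : ℕ) ≠ i) (hk' : (k : ℕ) ≠ i + 1) : swapTup n N i u k = u k := by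
  rw [swapTup_of_lt h, Function.comp_apply, Equiv.swap_apply_of_ne_of_ne] <;>
    simpa [Fin.ext_iff]

theorem swapTup_apply_succ_succ (h : i + 1 + 1 < n) (u : Fin n → Fin (N + 1)) :
    swapTup n N i u ⟨i + 1 + 1, h⟩ = u ⟨i + 1 + 1, h⟩ :=
  swapTup_apply_of_ne (by omega) u (by dsimp only; omega) (by dsimp only; omega)

theorem swapTup_succ_apply (h : i + 1 + 1 < n) (u : Fin n → Fin (N + 1)) :
    swapTup n N (i + 1) u ⟨i, by omega⟩ = u ⟨i, by omega⟩ :=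
  swapTup_apply_of_ne h u (by dsimp only; omega) (by dsimp only; omega)

theorem swapTup_swapTup (u : Fin n → Fin (N + 1)) : swapTup n N i (swapTup n N i u) = u := by
  by_cases h : i + 1 < n
  · funext k
    simp [swapTup_of_lt h]
  · simp [swapTup, h]

theorem swapTup_eq_self (h : i + 1 < n) {u : Fin n → Fin (N + 1)}
    (hu : u ⟨i, Nat.lt_of_succ_lt h⟩ = u ⟨i + 1, h⟩) : swapTup n N i u = u := by
  funext k
  rw [swapTup_of_lt h, Function.comp_apply, Equiv.swap_apply_def]
  split_ifs <;> simp_all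

theorem swapTup_braid (h : i + 2 < n) (u : Fin n → Fin (N + 1)) :
    swapTup n N i (swapTup n N (i + 1) (swapTup n N i u)) =
      swapTup n N (i + 1) (swapTup n N i (swapTup n N (i + 1) u)) := by
  simp only [swapTup_of_lt (show i + 1 < n by omega), swapTup_of_lt (show i + 1 + 1 < n by omega),
    Function.comp_assoc, ← Equiv.Perm.coe_mul]
  rw [Equiv.swap_mul_swap_mul_swap_eq] <;> simp only [ne_eq, Fin.mk.injEq] <;> omega

theorem swapTup_braid_of_eq (h : i + 2 < n) {u : Fin n → Fin (N + 1)}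
    (hu : u ⟨i, by omega⟩ = u ⟨i + 1, by omega⟩) :
    swapTup n N (i + 1) (swapTup n N i (swapTup n N (i + 1) u)) =
      swapTup n N i (swapTup n N (i + 1) u) := by
  rw [← swapTup_braid h, swapTup_eq_self (by omega) hu]

end swapTup

section bowlM

variable {F : Type*} [Field F] (q : F) {n N i : ℕ}

theorem bowlM_mulVec_single (h : i + 1 < n) (u : Fin n → Fin (N + 1)) :
    bowlM F q n N i *ᵥ Pi.single u 1 =
      if u ⟨i, Nat.lt_of_succ_lt h⟩ ≤ u ⟨i + 1, h⟩ then Pi.single (swapTup n N i u) 1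
      else q • Pi.single (swapTup n N i u) 1 + (1 - q) • Pi.single u 1 := by
  ext v
  rw [mulVec_single_one, bowlM, dif_pos h]
  by_cases hu : u ⟨i, Nat.lt_of_succ_lt h⟩ ≤ u ⟨i + 1, h⟩ <;> simp [hu, Pi.single_apply]

theorem bowlM_braid_mulVec_single (h : i + 2 < n) (u : Fin n → Fin (N + 1)) :
    bowlM F q n N i *ᵥ (bowlM F q n N (i + 1) *ᵥ (bowlM F q n N i *ᵥ Pi.single u 1)) =
      bowlM F q n N (i + 1) *ᵥ (bowlM F q n N i *ᵥ (bowlM F q n N (i + 1) *ᵥ Pi.single u 1)) := by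
  have h1 : i + 1 < n := by omega
  have h2 : i + 1 + 1 < n := by omega
  simp only [bowlM_mulVec_single q h1, bowlM_mulVec_single q h2, apply_ite (mulVec _), mulVec_add,
    mulVec_smul, swapTup_apply_left h1, swapTup_apply_left h2, swapTup_apply_right h1,
    swapTup_apply_right h2, swapTup_apply_succ_succ h2, swapTup_succ_apply h2, swapTup_swapTup]
  rcases lt_trichotomy (u ⟨i, by omega⟩) (u ⟨i + 1, h1⟩) with hxy | hxy | hxy <;>
  rcases lt_trichotomy (u ⟨i + 1, h1⟩) (u ⟨i + 1 + 1, h2⟩) with hyz | hyz | hyz <;>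
  rcases lt_trichotomy (u ⟨i, by omega⟩) (u ⟨i + 1 + 1, h2⟩) with hxz | hxz | hxz <;>
  simp only [hxy, hyz, hxz, le_refl, le_of_lt, not_le_of_gt, if_true, if_false, swapTup_braid h,
    swapTup_eq_self h1, swapTup_eq_self h2, swapTup_braid_of_eq h] <;>
  first | order | module

end bowlM

theorem bowlM_braid_relation_general (F : Type*) [Field F] (q : F) (n N : ℕ)
    (i : ℕ) (hi : i + 2 < n) :
    bowlM F q n N i * bowlM F q n N (i + 1) * bowlM F q n N i =
      bowlM F q n N (i + 1) * bowlM F q n N i * bowlM F q n N (i + 1) := by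
  refine ext_of_mulVec_single fun u => ?_
  simp only [← mulVec_mulVec]
  exact bowlM_braid_mulVec_single q hi u

/-- **Braid relation for the bowling-ball matrices.**
For every index `i` (0-indexed, so `i+2 < n` corresponds to
`1 ≤ i ≤ n-2` in 1-indexed notation),
`M_i · M_{i+1} · M_i = M_{i+1} · M_i · M_{i+1}`. -/
theorem bowlM_braid_relation (F : Type*) [Field F] (q : F) (n N : ℕ)
    (hn : 2 ≤ n) (hN : 1 ≤ N) (i : ℕ) (hi : i + 2 < n) :
    bowlM F q n N i * bowlM F q n N (i + 1) * bowlM F q n N i =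
      bowlM F q n N (i + 1) * bowlM F q n N i * bowlM F q n N (i + 1) :=
  bowlM_braid_relation_general F q n N i hi
end

section
/- The bowling-ball matrices define a representation of the positive braid monoid: there exists a monoid homomorphism ρ from the monoid presented by generators σ_1,…,σ_{n−1} subject to the relations σ_i σ_j = σ_j σ_i for |i − j| ≥ 2 and σ_i σ_{i+1} σ_i = σ_{i+1} σ_i σ_{i+1}, into the multiplicative monoid of square matrices over F indexed by S, such that ρ(σ_i) = M_i for every i. -/
/-!
Right multiplication by `M_i` acts on each row of a matrix through an operator `bowlOp` that
only reads and permutes lanes `i` and `i + 1`, with coefficients given by the two-lane rule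
`bowlStep`. Operators on disjoint pairs of lanes commute, which gives far commutativity. For the
braid relation, freeze every lane except `i, i + 1, i + 2`: the operators for `σ_i` and
`σ_{i+1}` then become the operators `bowlStepLeft`, `bowlStepRight` on functions of three ball
counts, and their braid relation is a polynomial identity checked on each relative order of
the three counts.
-/

open Matrix

/-- The defining relations of the positive braid monoid `B_n^+` on the
generators `σ_1, …, σ_{n-1}` (indexed here by `Fin (n-1)`, 0-indexed):
far commutativity `σ_i σ_j = σ_j σ_i` for `|i - j| ≥ 2`, and the braid
relation `σ_i σ_{i+1} σ_i = σ_{i+1} σ_i σ_{i+1}`. -/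
def braidRels (n : ℕ) : FreeMonoid (Fin (n - 1)) → FreeMonoid (Fin (n - 1)) → Prop :=
  fun x y =>
    (∃ i j : Fin (n - 1), ((i : ℕ) + 2 ≤ j ∨ (j : ℕ) + 2 ≤ i) ∧
      x = FreeMonoid.of i * FreeMonoid.of j ∧ y = FreeMonoid.of j * FreeMonoid.of i) ∨
    (∃ i j : Fin (n - 1), (j : ℕ) = (i : ℕ) + 1 ∧
      x = FreeMonoid.of i * FreeMonoid.of j * FreeMonoid.of i ∧
      y = FreeMonoid.of j * FreeMonoid.of i * FreeMonoid.of j)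

/-- The positive braid monoid `B_n^+`, presented by the generators
`σ_1, …, σ_{n-1}` modulo far commutativity and the braid relations. -/
def PositiveBraidMonoid (n : ℕ) := (conGen (braidRels n)).Quotient

instance (n : ℕ) : Monoid (PositiveBraidMonoid n) :=
  inferInstanceAs (Monoid (conGen (braidRels n)).Quotient)

/-- The generator `σ_i` of the positive braid monoid. -/
def PositiveBraidMonoid.sigma (n : ℕ) (i : Fin (n - 1)) : PositiveBraidMonoid n :=
  (conGen (braidRels n)).mk' (FreeMonoid.of i)

section BowlStep

variable {R α : Type*} [CommRing R] [LinearOrder α] (q : R)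

def bowlStep (x y : α) (a b : R) : R :=
  if x ≤ y then a else q * a + (1 - q) * b

def bowlStepLeft (g : α → α → α → R) (x y z : α) : R :=
  bowlStep q x y (g y x z) (g x y z)

def bowlStepRight (g : α → α → α → R) (x y z : α) : R :=
  bowlStep q y z (g x z y) (g x y z)

theorem bowlStep_bowlStep_comm (x y x' y' : α) (a b c d : R) :
    bowlStep q x y (bowlStep q x' y' a b) (bowlStep q x' y' c d) =
      bowlStep q x' y' (bowlStep q x y a c) (bowlStep q x y b d) := by
  unfold bowlStep
  split_ifs <;> ring

theorem bowlStepLeft_bowlStepRight_braid (g : α → α → α → R) :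
    bowlStepLeft q (bowlStepRight q (bowlStepLeft q g)) =
      bowlStepRight q (bowlStepLeft q (bowlStepRight q g)) := by
  funext x y z
  simp only [bowlStepLeft, bowlStepRight, bowlStep]
  rcases lt_trichotomy x y with hxy | hxy | hxy <;>
  rcases lt_trichotomy y z with hyz | hyz | hyz <;>
  rcases lt_trichotomy x z with hxz | hxz | hxz <;>
  subst_vars <;> first
    | (exfalso; order)
    | (simp only [le_refl, if_true, *, le_of_lt, not_le_of_gt, if_false] <;> ring)

end BowlStep

section Lanes

variable {n N : ℕ}

theorem swapTup_apply_of_ne_s2 {i x : ℕ} (u : Fin n → Fin (N + 1)) (hx : x < n) (hi : x ≠ i)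
    (hi' : x ≠ i + 1) : swapTup n N i u ⟨x, hx⟩ = u ⟨x, hx⟩ := by
  unfold swapTup
  split_ifs
  · rw [Function.comp_apply, Equiv.swap_apply_of_ne_of_ne] <;> simp [hi, hi']
  · rfl

theorem swapTup_comm_of_add_two_le {i j : ℕ} (hij : i + 2 ≤ j) (u : Fin n → Fin (N + 1)) :
    swapTup n N i (swapTup n N j u) = swapTup n N j (swapTup n N i u) := by
  funext x
  simp only [swapTup]
  split_ifs with hi hj hj
  · simp only [Function.comp_apply]
    have hd : (Equiv.swap (⟨i, by omega⟩ : Fin n) ⟨i + 1, hi⟩).Disjoint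
        (Equiv.swap ⟨j, by omega⟩ ⟨j + 1, hj⟩) :=
      Equiv.Perm.disjoint_swap_swap (by simp [Fin.ext_iff]; omega)
    exact congrArg u (DFunLike.congr_fun hd.commute.eq x).symm
  all_goals rfl

def setThreeLanes {i : ℕ} (h : i + 2 < n) (u : Fin n → Fin (N + 1)) (a b c : Fin (N + 1)) :
    Fin n → Fin (N + 1) :=
  Function.update (Function.update (Function.update u ⟨i, by omega⟩ a) ⟨i + 1, by omega⟩ b)
    ⟨i + 2, h⟩ c

variable {i : ℕ} (h : i + 2 < n) (u : Fin n → Fin (N + 1)) (a b c : Fin (N + 1))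

theorem setThreeLanes_self :
    setThreeLanes h u (u ⟨i, by omega⟩) (u ⟨i + 1, by omega⟩) (u ⟨i + 2, h⟩) = u := by
  simp [setThreeLanes]

theorem setThreeLanes_apply_fst : setThreeLanes h u a b c ⟨i, by omega⟩ = a := by
  simp [setThreeLanes, Fin.ext_iff]

theorem setThreeLanes_apply_snd : setThreeLanes h u a b c ⟨i + 1, by omega⟩ = b := by
  simp [setThreeLanes, Fin.ext_iff]

theorem setThreeLanes_apply_thd : setThreeLanes h u a b c ⟨i + 2, h⟩ = c := by
  simp [setThreeLanes]

theorem swapTup_setThreeLanes_left :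
    swapTup n N i (setThreeLanes h u a b c) = setThreeLanes h u b a c := by
  funext x
  simp only [swapTup, dif_pos (show i + 1 < n by omega), setThreeLanes, Function.comp_apply,
    Equiv.swap_apply_def, Function.update_apply]
  split_ifs <;> simp_all [Fin.ext_iff]

theorem swapTup_setThreeLanes_right :
    swapTup n N (i + 1) (setThreeLanes h u a b c) = setThreeLanes h u a c b := by
  funext x
  simp only [swapTup, dif_pos h, setThreeLanes, Function.comp_apply,
    Equiv.swap_apply_def, Function.update_apply]
  split_ifs <;> simp_all [Fin.ext_iff]

end Lanes

section BowlOp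

variable {R : Type*} [CommRing R] (q : R) {n N : ℕ}

def bowlOp {i : ℕ} (h : i + 1 < n) (g : (Fin n → Fin (N + 1)) → R) (u : Fin n → Fin (N + 1)) :
    R :=
  bowlStep q (u ⟨i, by omega⟩) (u ⟨i + 1, h⟩) (g (swapTup n N i u)) (g u)

theorem bowlOp_comm {i j : ℕ} (hij : i + 2 ≤ j) (hi : i + 1 < n) (hj : j + 1 < n)
    (g : (Fin n → Fin (N + 1)) → R) :
    bowlOp q hi (bowlOp q hj g) = bowlOp q hj (bowlOp q hi g) := by
  funext u
  simp only [bowlOp, swapTup_apply_of_ne_s2 _ _ (show i ≠ j by omega) (by omega),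
    swapTup_apply_of_ne_s2 _ _ (show i + 1 ≠ j by omega) (by omega),
    swapTup_apply_of_ne_s2 _ _ (show j ≠ i by omega) (by omega),
    swapTup_apply_of_ne_s2 _ _ (show j + 1 ≠ i by omega) (by omega),
    swapTup_comm_of_add_two_le hij]
  exact bowlStep_bowlStep_comm q _ _ _ _ _ _ _ _

variable {i : ℕ} (h : i + 2 < n)

theorem bowlOp_setThreeLanes_left (g : (Fin n → Fin (N + 1)) → R) (u : Fin n → Fin (N + 1)) :
    (fun a b c => bowlOp q (i := i) (by omega) g (setThreeLanes h u a b c)) =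
      bowlStepLeft q (fun a b c => g (setThreeLanes h u a b c)) := by
  funext a b c
  simp only [bowlOp, bowlStepLeft, setThreeLanes_apply_fst, setThreeLanes_apply_snd,
    swapTup_setThreeLanes_left]

theorem bowlOp_setThreeLanes_right (g : (Fin n → Fin (N + 1)) → R) (u : Fin n → Fin (N + 1)) :
    (fun a b c => bowlOp q h g (setThreeLanes h u a b c)) =
      bowlStepRight q (fun a b c => g (setThreeLanes h u a b c)) := by
  funext a b c
  simp only [bowlOp, bowlStepRight, setThreeLanes_apply_snd, setThreeLanes_apply_thd,
    swapTup_setThreeLanes_right]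

theorem bowlOp_braid (g : (Fin n → Fin (N + 1)) → R) :
    bowlOp q (i := i) (by omega) (bowlOp q h (bowlOp q (i := i) (by omega) g)) =
      bowlOp q h (bowlOp q (i := i) (by omega) (bowlOp q h g)) := by
  funext u
  have key : (fun a b c =>
        bowlOp q (i := i) (by omega) (bowlOp q h (bowlOp q (i := i) (by omega) g))
          (setThreeLanes h u a b c)) =
      fun a b c => bowlOp q h (bowlOp q (i := i) (by omega) (bowlOp q h g))
          (setThreeLanes h u a b c) := by
    simp only [bowlOp_setThreeLanes_left, bowlOp_setThreeLanes_right,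
      bowlStepLeft_bowlStepRight_braid]
  simpa only [setThreeLanes_self] using
    congr_fun₃ key (u ⟨i, by omega⟩) (u ⟨i + 1, by omega⟩) (u ⟨i + 2, h⟩)

end BowlOp

section BowlM

variable {F : Type*} [Field F] (q : F) {n N : ℕ}

theorem mul_bowlM_row {i : ℕ} (h : i + 1 < n)
    (A : Matrix (Fin n → Fin (N + 1)) (Fin n → Fin (N + 1)) F) (v : Fin n → Fin (N + 1)) :
    (A * bowlM F q n N i) v = bowlOp q h (A v) := by
  funext u
  simp only [Matrix.mul_apply, bowlM, dif_pos h, Matrix.of_apply, bowlOp, bowlStep]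
  split_ifs
  · simp
  · simp [mul_add, Finset.sum_add_distrib]
    ring

theorem bowlM_mul_bowlM_comm {i j : ℕ} (hij : i + 2 ≤ j) (hj : j + 1 < n) :
    bowlM F q n N i * bowlM F q n N j = bowlM F q n N j * bowlM F q n N i := by
  have hi : i + 1 < n := by omega
  have rows : (1 : Matrix _ _ F) * bowlM F q n N i * bowlM F q n N j =
      1 * bowlM F q n N j * bowlM F q n N i := by
    funext v
    simp only [mul_bowlM_row q hi, mul_bowlM_row q hj, bowlOp_comm q hij hi hj]
  simpa only [one_mul] using rows

theorem bowlM_braid {i : ℕ} (h : i + 2 < n) :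
    bowlM F q n N i * bowlM F q n N (i + 1) * bowlM F q n N i =
      bowlM F q n N (i + 1) * bowlM F q n N i * bowlM F q n N (i + 1) := by
  have rows : (1 : Matrix _ _ F) * bowlM F q n N i * bowlM F q n N (i + 1) * bowlM F q n N i =
      1 * bowlM F q n N (i + 1) * bowlM F q n N i * bowlM F q n N (i + 1) := by
    funext v
    simp only [mul_bowlM_row q (show i + 1 < n by omega), mul_bowlM_row q h, bowlOp_braid q h]
  simpa only [one_mul] using rows

end BowlM

theorem bowlM_is_representation_general (F : Type*) [Field F] (q : F) (n N : ℕ) :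
    ∃ ρ : PositiveBraidMonoid n →*
        Matrix (Fin n → Fin (N + 1)) (Fin n → Fin (N + 1)) F,
      ∀ i : Fin (n - 1), ρ (PositiveBraidMonoid.sigma n i) = bowlM F q n N i := by
  let φ := FreeMonoid.lift fun i : Fin (n - 1) => bowlM F q n N i
  have hφ : conGen (braidRels n) ≤ Con.ker φ := by
    refine Con.conGen_le.mpr ?_
    rintro _ _ (⟨i, j, hij | hji, rfl, rfl⟩ | ⟨i, j, hj, rfl, rfl⟩) <;>
      simp only [Con.ker_rel, map_mul, φ, FreeMonoid.lift_eval_of]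
    · exact bowlM_mul_bowlM_comm q hij (by omega)
    · exact (bowlM_mul_bowlM_comm q hji (by omega)).symm
    · rw [hj]
      exact bowlM_braid q (by omega)
  exact ⟨Con.lift _ φ hφ, fun i =>
    FreeMonoid.lift_eval_of (fun i : Fin (n - 1) => bowlM F q n N i) i⟩

/-- **Theorem 1: the bowling-ball matrices define a representation of the
positive braid monoid.**  There is a monoid homomorphism `ρ` from `B_n^+`
to the multiplicative monoid of square matrices indexed by the tuples of
ball counts, sending each generator `σ_i` to the bowling-ball matrix
`M_i`. -/
theorem bowlM_is_representation (F : Type*) [Field F] (q : F) (n N : ℕ)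
    (hn : 2 ≤ n) (hN : 1 ≤ N) :
    ∃ ρ : PositiveBraidMonoid n →*
        Matrix (Fin n → Fin (N + 1)) (Fin n → Fin (N + 1)) F,
      ∀ i : Fin (n - 1), ρ (PositiveBraidMonoid.sigma n i) = bowlM F q n N i :=
  bowlM_is_representation_general F q n N
end

section
/- Permutation braids act on weakly increasing inputs without falls: let w be a permutation of {1,…,n} with reduced word (i_1,…,i_ℓ), and set P_w = M_{i_1}⋯M_{i_ℓ}. If u ∈ S is weakly increasing, i.e. u_1 ≤ u_2 ≤ ⋯ ≤ u_n, then P_w e_u = e_{u∘w^{-1}}, the basis vector of the tuple whose entry in position w(i) equals u_i for all i. -/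
/-!
Induct on the reduced word from the left. If `i :: l` is reduced for `w = s_i w'`, then `l` is
reduced for `w'` and `w'⁻¹ i < w'⁻¹ (i+1)`, since otherwise `s_i` would lower the inversion count
and `w` would have fewer than `|l| + 1` inversions. Hence the tuple `u ∘ w'⁻¹` of `P_{w'} e_u`
is weakly increasing at positions `i, i+1`, and there `M_i` is the plain swap: no `(1-q)` term.
-/

open Matrix

/-- The adjacent transposition `s_i = (i, i+1)` of `Fin n`
(0-indexed; the identity permutation out of range). -/
def adjSwap (n : ℕ) (i : ℕ) : Equiv.Perm (Fin n) :=
  if h : i + 1 < n then Equiv.swap ⟨i, Nat.lt_of_succ_lt h⟩ ⟨i + 1, h⟩ else 1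

/-- The number of inversions of a permutation `w` of `Fin n`:
the number of pairs `i < j` with `w j < w i`. -/
def inversions (n : ℕ) (w : Equiv.Perm (Fin n)) : ℕ :=
  (Finset.univ.filter fun p : Fin n × Fin n => p.1 < p.2 ∧ w p.2 < w p.1).card

/-- A list `l` of indices (0-indexed, each in `{0, …, n-2}`) is a reduced word
for the permutation `w` if `w` is the composite of the corresponding adjacent
transpositions and the length of `l` equals the number of inversions of `w`. -/
def IsReducedWord (n : ℕ) (w : Equiv.Perm (Fin n)) (l : List ℕ) : Prop :=
  (∀ i ∈ l, i + 1 < n) ∧ (l.map (adjSwap n)).prod = w ∧ l.length = inversions n w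

/-- The product `M_{i_1} ⋯ M_{i_ℓ}` of bowling-ball matrices along a word. -/
def prodBowlM (F : Type*) [Field F] (q : F) (n N : ℕ) (l : List ℕ) :
    Matrix (Fin n → Fin (N + 1)) (Fin n → Fin (N + 1)) F :=
  (l.map (bowlM F q n N)).prod

open Equiv Finset

lemma swap_apply_lt_swap_apply_iff {n : ℕ} {a b c d : Fin n} (hab : (a : ℕ) + 1 = b)
    (hcd : ¬(c = a ∧ d = b)) (hdc : ¬(c = b ∧ d = a)) :
    swap a b c < swap a b d ↔ c < d := by
  simp only [swap_apply_def, Fin.lt_def, Fin.ext_iff, not_and, apply_ite Fin.val] at *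
  split_ifs <;> omega

lemma inversions_swap_mul_of_lt {n : ℕ} {a b : Fin n} (hab : (a : ℕ) + 1 = b)
    {w : Perm (Fin n)} (h : w⁻¹ a < w⁻¹ b) :
    inversions n (swap a b * w) = inversions n w + 1 := by
  have hba : ¬ b ≤ a := by rw [Fin.le_def]; omega
  have hnew :
      (w⁻¹ a, w⁻¹ b) ∉ univ.filter fun p : Fin n × Fin n => p.1 < p.2 ∧ w p.2 < w p.1 := by
    simpa using fun _ => hba.imp le_of_lt
  unfold inversions
  rw [← card_insert_of_notMem hnew]
  congr 1
  ext ⟨c, d⟩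
  rw [mem_filter, mem_insert, mem_filter]
  simp only [mem_univ, true_and, Perm.mul_apply, Prod.mk.injEq]
  by_cases hp : c = w⁻¹ a ∧ d = w⁻¹ b
  · obtain ⟨rfl, rfl⟩ := hp
    have hab' : a < b := by rw [Fin.lt_def]; omega
    simpa [hab'] using h
  · have hbad : ¬(w d = b ∧ w c = a) := fun ⟨hd, hc⟩ => hp ⟨by simp [← hc], by simp [← hd]⟩
    have hrev : c < d → ¬(w d = a ∧ w c = b) := fun hcd ⟨hd, hc⟩ =>
      (lt_asymm h) (by simpa [← hc, ← hd] using hcd)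
    simp only [hp, false_or]
    exact and_congr_right fun hcd => swap_apply_lt_swap_apply_iff hab (hrev hcd) hbad

lemma inversions_swap_mul_of_gt {n : ℕ} {a b : Fin n} (hab : (a : ℕ) + 1 = b)
    {w : Perm (Fin n)} (h : w⁻¹ b < w⁻¹ a) :
    inversions n (swap a b * w) + 1 = inversions n w := by
  have h' : (swap a b * w)⁻¹ a < (swap a b * w)⁻¹ b := by simpa using h
  rw [← inversions_swap_mul_of_lt hab h', swap_mul_self_mul]

lemma adjSwap_of_lt {n i : ℕ} (hi : i + 1 < n) :
    adjSwap n i = swap ⟨i, Nat.lt_of_succ_lt hi⟩ ⟨i + 1, hi⟩ :=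
  dif_pos hi

lemma inversions_adjSwap_mul_le {n : ℕ} (i : ℕ) (w : Perm (Fin n)) :
    inversions n (adjSwap n i * w) ≤ inversions n w + 1 := by
  by_cases hi : i + 1 < n
  · have hne : w⁻¹ ⟨i, Nat.lt_of_succ_lt hi⟩ ≠ w⁻¹ ⟨i + 1, hi⟩ := by simp [Fin.ext_iff]
    rw [adjSwap_of_lt hi]
    rcases hne.lt_or_gt with h | h
    · exact (inversions_swap_mul_of_lt rfl h).le
    · have := inversions_swap_mul_of_gt rfl h
      omega
  · simp [adjSwap, hi]

lemma inversions_prod_adjSwap_le_length {n : ℕ} (l : List ℕ) :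
    inversions n (l.map (adjSwap n)).prod ≤ l.length := by
  induction l with
  | nil => simpa [inversions] using fun _ _ => le_of_lt
  | cons i l ih => simpa using (inversions_adjSwap_mul_le i _).trans (Nat.succ_le_succ ih)

namespace IsReducedWord

variable {n : ℕ} {w : Perm (Fin n)} {i : ℕ} {l : List ℕ}

lemma tail (h : IsReducedWord n w (i :: l)) : IsReducedWord n (l.map (adjSwap n)).prod l := by
  obtain ⟨hidx, hw, hlen⟩ := h
  refine ⟨fun j hj => hidx j (List.mem_cons_of_mem i hj), rfl, ?_⟩
  have hstep := inversions_adjSwap_mul_le i (l.map (adjSwap n)).prod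
  have hle := inversions_prod_adjSwap_le_length (n := n) l
  simp only [List.map_cons, List.prod_cons, List.length_cons] at hw hlen
  subst hw
  omega

lemma tail_inv_lt (h : IsReducedWord n w (i :: l)) (hi : i + 1 < n) :
    (l.map (adjSwap n)).prod⁻¹ ⟨i, Nat.lt_of_succ_lt hi⟩ <
      (l.map (adjSwap n)).prod⁻¹ ⟨i + 1, hi⟩ := by
  obtain ⟨-, hw, hlen⟩ := h
  have hne : (l.map (adjSwap n)).prod⁻¹ ⟨i, Nat.lt_of_succ_lt hi⟩ ≠
      (l.map (adjSwap n)).prod⁻¹ ⟨i + 1, hi⟩ := by simp [Fin.ext_iff]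
  refine hne.lt_or_gt.resolve_right fun hgt => ?_
  have hdrop := inversions_swap_mul_of_gt rfl hgt
  have hle := inversions_prod_adjSwap_le_length (n := n) l
  simp only [List.map_cons, List.prod_cons, List.length_cons, adjSwap_of_lt hi] at hw hlen
  subst hw
  omega

end IsReducedWord

lemma swapTup_eq_comp_adjSwap (n N i : ℕ) (u : Fin n → Fin (N + 1)) :
    swapTup n N i u = u ∘ adjSwap n i := by
  unfold swapTup adjSwap
  split_ifs <;> rfl

lemma bowlM_mulVec_single_of_le {F : Type*} [Field F] (q : F) {n N i : ℕ} (hi : i + 1 < n)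
    {u : Fin n → Fin (N + 1)} (hu : u ⟨i, Nat.lt_of_succ_lt hi⟩ ≤ u ⟨i + 1, hi⟩) :
    bowlM F q n N i *ᵥ Pi.single u 1 = Pi.single (swapTup n N i u) 1 := by
  ext v
  simp [bowlM, hi, hu, Pi.single_apply]

lemma prodBowlM_cons (F : Type*) [Field F] (q : F) (n N i : ℕ) (l : List ℕ) :
    prodBowlM F q n N (i :: l) = bowlM F q n N i * prodBowlM F q n N l :=
  List.prod_cons

theorem prodBowlM_monotone_input_general (F : Type*) [Field F] (q : F) (n N : ℕ)
    (w : Equiv.Perm (Fin n)) (l : List ℕ)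
    (hl : IsReducedWord n w l) (u : Fin n → Fin (N + 1)) (hu : Monotone u) :
    prodBowlM F q n N l *ᵥ Pi.single u 1 = Pi.single (u ∘ ⇑w⁻¹) 1 := by
  induction l generalizing w with
  | nil =>
    obtain rfl : 1 = w := hl.2.1
    rw [prodBowlM, List.map_nil, List.prod_nil, one_mulVec]
    rfl
  | cons i l ih =>
    set w' := (l.map (adjSwap n)).prod
    have hi : i + 1 < n := hl.1 i List.mem_cons_self
    have hw : adjSwap n i * w' = w := hl.2.1
    have hle : (u ∘ ⇑w'⁻¹) ⟨i, Nat.lt_of_succ_lt hi⟩ ≤ (u ∘ ⇑w'⁻¹) ⟨i + 1, hi⟩ :=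
      hu (hl.tail_inv_lt hi).le
    rw [prodBowlM_cons, ← mulVec_mulVec, ih w' hl.tail, bowlM_mulVec_single_of_le q hi hle,
      swapTup_eq_comp_adjSwap, ← hw, _root_.mul_inv_rev, adjSwap_of_lt hi, swap_inv]
    rfl

/-- **Permutation braids act on weakly increasing inputs without falls.**
If `l` is a reduced word for the permutation `w` and `u` is weakly
increasing, then `P_w e_u = e_{u ∘ w⁻¹}`, the basis vector of the tuple
whose entry in position `w i` equals `u i` for all `i`. -/
theorem prodBowlM_monotone_input (F : Type*) [Field F] (q : F) (n N : ℕ)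
    (hn : 2 ≤ n) (hN : 1 ≤ N) (w : Equiv.Perm (Fin n)) (l : List ℕ)
    (hl : IsReducedWord n w l) (u : Fin n → Fin (N + 1)) (hu : Monotone u) :
    prodBowlM F q n N l *ᵥ Pi.single u 1 = Pi.single (u ∘ ⇑w⁻¹) 1 :=
  prodBowlM_monotone_input_general F q n N w l hl u hu
end

section
/- Three distinct stacks bowled into the full twist on three lanes: let n = 3, let P = M_1·M_2·M_1, and fix integers a > b > c ≥ 0 with a ≤ N. Then for every tuple u that is an arrangement of the three values a, b, c, the coefficient of the basis vector e_{(c,b,a)} in P e_u equals q³ if u = (a,b,c), and equals 0 for each of the other five arrangements. -/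
open Matrix

lemma swapTup0 {N : ℕ} (x y z : Fin (N+1)) : swapTup 3 N 0 ![x,y,z] = ![y,x,z] := by
  funext j; fin_cases j <;> simp [swapTup, Equiv.swap_apply_def]

lemma swapTup1 {N : ℕ} (x y z : Fin (N+1)) : swapTup 3 N 1 ![x,y,z] = ![x,z,y] := by
  funext j; fin_cases j <;> simp [swapTup, Equiv.swap_apply_def]

lemma perm3 (σ : Equiv.Perm (Fin 3)) :
    (σ 0 = 0 ∧ σ 1 = 1 ∧ σ 2 = 2) ∨ (σ 0 = 0 ∧ σ 1 = 2 ∧ σ 2 = 1) ∨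
    (σ 0 = 1 ∧ σ 1 = 0 ∧ σ 2 = 2) ∨ (σ 0 = 1 ∧ σ 1 = 2 ∧ σ 2 = 0) ∨
    (σ 0 = 2 ∧ σ 1 = 0 ∧ σ 2 = 1) ∨ (σ 0 = 2 ∧ σ 1 = 1 ∧ σ 2 = 0) := by
  revert σ; decide

lemma comp3 {α : Type*} (f : Fin 3 → α) (g : Fin 3 → Fin 3) :
    f ∘ g = ![f (g 0), f (g 1), f (g 2)] := by
  funext j; fin_cases j <;> rfl

lemma vecEq3 {α : Type*} (x y z x' y' z' : α) :
    (![x,y,z] = ![x',y',z']) ↔ (x = x' ∧ y = y' ∧ z = z') := by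
  constructor
  · intro h
    exact ⟨congrFun h 0, congrFun h 1, congrFun h 2⟩
  · rintro ⟨rfl, rfl, rfl⟩; rfl

lemma bowl_apply {F : Type*} [Field F] (q : F) {N : ℕ} {i : ℕ} (h : i + 1 < 3)
    (v u : Fin 3 → Fin (N+1)) :
    bowlM F q 3 N i v u =
      if u ⟨i, Nat.lt_of_succ_lt h⟩ ≤ u ⟨i + 1, h⟩ then
        (if v = swapTup 3 N i u then (1:F) else 0)
      else
        q * (if v = swapTup 3 N i u then 1 else 0) + (1 - q) * (if v = u then 1 else 0) := by
  rw [bowlM, dif_pos h]; rfl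

lemma mul_bowl {F : Type*} [Field F] (q : F) {N : ℕ} {i : ℕ} (h : i + 1 < 3)
    (A : Matrix (Fin 3 → Fin (N+1)) (Fin 3 → Fin (N+1)) F) (v u : Fin 3 → Fin (N+1)) :
    (A * bowlM F q 3 N i) v u =
      if u ⟨i, Nat.lt_of_succ_lt h⟩ ≤ u ⟨i + 1, h⟩ then A v (swapTup 3 N i u)
      else q * A v (swapTup 3 N i u) + (1 - q) * A v u := by
  rw [mul_apply]
  simp only [bowl_apply q h]
  split_ifs with hle
  · simp
  · simp [mul_add, Finset.sum_add_distrib, mul_comm, mul_left_comm]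

lemma mulM0 {F : Type*} [Field F] (q : F) {N : ℕ}
    (A : Matrix (Fin 3 → Fin (N+1)) (Fin 3 → Fin (N+1)) F) (v : Fin 3 → Fin (N+1))
    (x y z : Fin (N+1)) :
    (A * bowlM F q 3 N 0) v ![x,y,z] =
      if x ≤ y then A v ![y,x,z] else q * A v ![y,x,z] + (1 - q) * A v ![x,y,z] := by
  rw [mul_bowl q (by norm_num), swapTup0]
  norm_num

lemma mulM1 {F : Type*} [Field F] (q : F) {N : ℕ}
    (A : Matrix (Fin 3 → Fin (N+1)) (Fin 3 → Fin (N+1)) F) (v : Fin 3 → Fin (N+1))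
    (x y z : Fin (N+1)) :
    (A * bowlM F q 3 N 1) v ![x,y,z] =
      if y ≤ z then A v ![x,z,y] else q * A v ![x,z,y] + (1 - q) * A v ![x,y,z] := by
  rw [mul_bowl q (by norm_num), swapTup1]
  norm_num

lemma M0app {F : Type*} [Field F] (q : F) {N : ℕ} (v : Fin 3 → Fin (N+1))
    (x y z : Fin (N+1)) :
    bowlM F q 3 N 0 v ![x,y,z] =
      if x ≤ y then (if v = ![y,x,z] then (1:F) else 0)
      else q * (if v = ![y,x,z] then 1 else 0) + (1 - q) * (if v = ![x,y,z] then 1 else 0) := by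
  rw [bowl_apply q (by norm_num), swapTup0]
  norm_num

/-- **Three distinct stacks bowled into the full twist on three lanes.**
Let `P = M_1 · M_2 · M_1` (here 0-indexed as `M_0 · M_1 · M_0`) and fix
integers `a > b > c ≥ 0` with `a ≤ N`.  For every tuple `u` that is an
arrangement of the three values `a, b, c`, the coefficient of the basis
vector `e_{(c,b,a)}` in `P e_u` (i.e. the `((c,b,a), u)` matrix entry)
equals `q³` if `u = (a,b,c)`, and `0` for the other five arrangements. -/
theorem fullTwist_three_distinct_stacks (F : Type*) [Field F] (q : F) (N : ℕ) (hN : 1 ≤ N)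
    (a b c : ℕ) (hab : b < a) (hbc : c < b) (ha : a ≤ N)
    (u : Fin 3 → Fin (N + 1))
    (hu : ∃ σ : Equiv.Perm (Fin 3),
      u = ![(⟨a, by omega⟩ : Fin (N + 1)), ⟨b, by omega⟩, ⟨c, by omega⟩] ∘ ⇑σ) :
    (bowlM F q 3 N 0 * bowlM F q 3 N 1 * bowlM F q 3 N 0)
        ![(⟨c, by omega⟩ : Fin (N + 1)), ⟨b, by omega⟩, ⟨a, by omega⟩] u =
      if u = ![(⟨a, by omega⟩ : Fin (N + 1)), ⟨b, by omega⟩, ⟨c, by omega⟩] then q ^ 3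
      else 0 := by
  have hba : b ≤ a := hab.le
  have hcb : c ≤ b := hbc.le
  have hca : c ≤ a := hcb.trans hba
  have n1 : ¬ a ≤ b := by omega
  have n2 : ¬ b ≤ c := by omega
  have n3 : ¬ a ≤ c := by omega
  have e1 : a ≠ b := by omega
  have e2 : b ≠ a := by omega
  have e3 : b ≠ c := by omega
  have e4 : c ≠ b := by omega
  have e5 : a ≠ c := by omega
  have e6 : c ≠ a := by omega
  obtain ⟨σ, rfl⟩ := hu
  rcases perm3 σ with ⟨h0,h1,h2⟩|⟨h0,h1,h2⟩|⟨h0,h1,h2⟩|⟨h0,h1,h2⟩|⟨h0,h1,h2⟩|⟨h0,h1,h2⟩ <;>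
    simp only [comp3 _ ⇑σ, h0, h1, h2, Matrix.cons_val_zero, Matrix.cons_val_one,
      Matrix.head_cons, Matrix.cons_val_two, Matrix.tail_cons] <;>
    simp only [mulM0 q, mulM1 q, M0app q, Fin.mk_le_mk, vecEq3, Fin.mk.injEq] <;>
    simp [n1, n2, n3, e1, e2, e3, e4, e5, e6, hba, hcb, hca] <;>
    ring
end
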